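/- The function g(t) = e^{-1/t} is absolutely monotonic on the interval (-∞,0); that is, for every integer i ≥ 0 and every t < 0, g^{(i)}(t) ≥ 0. -/

import Mathlib

/-!
With `u = -1/t` we have `du/dt = u²`, so the derivative of `p(-1/t) e^{-1/t}` is
`q(-1/t) e^{-1/t}` with `q = X² (p + p')`. Starting from `p = 1`, every derivative of
`e^{-1/t}` is thus `Pₙ(-1/t) e^{-1/t}` for a polynomial `Pₙ` with nonnegative coefficients,
which is nonnegative because `-1/t > 0` for `t < 0`.
-/

open Polynomial

lemma Polynomial.eval_nonneg_of_coeff_nonneg {R : Type*} [Semiring R] [PartialOrder R]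
    [IsOrderedRing R] {p : R[X]} (hp : ∀ k, 0 ≤ p.coeff k) {x : R} (hx : 0 ≤ x) :
    0 ≤ p.eval x := by
  rw [eval_eq_sum_range]
  exact Finset.sum_nonneg fun k _ => mul_nonneg (hp k) (pow_nonneg hx k)

noncomputable def expNegInvPoly : ℕ → ℝ[X]
  | 0 => 1
  | n + 1 => X ^ 2 * (expNegInvPoly n + derivative (expNegInvPoly n))

lemma expNegInvPoly_coeff_nonneg (n k : ℕ) : 0 ≤ (expNegInvPoly n).coeff k := by
  induction n generalizing k with
  | zero => rw [expNegInvPoly, coeff_one]; split_ifs <;> norm_num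
  | succ n ih =>
    rw [expNegInvPoly, coeff_X_pow_mul']
    split_ifs
    · rw [coeff_add, coeff_derivative]
      have := ih (k - 2)
      have := ih (k - 2 + 1)
      positivity
    · exact le_rfl

lemma hasDerivAt_eval_neg_inv_mul_exp (p : ℝ[X]) {s : ℝ} (hs : s ≠ 0) :
    HasDerivAt (fun x => p.eval (-1 / x) * Real.exp (-1 / x))
      ((X ^ 2 * (p + derivative p)).eval (-1 / s) * Real.exp (-1 / s)) s := by
  have hu : HasDerivAt (fun x : ℝ => -1 / x) ((-1 / s) ^ 2) s := by
    simpa [neg_div, div_pow] using (hasDerivAt_inv hs).fun_neg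
  refine (((p.hasDerivAt _).comp s hu).fun_mul
    ((Real.hasDerivAt_exp _).comp s hu)).congr_deriv ?_
  simp only [Function.comp_apply, eval_mul, eval_add, eval_pow, eval_X]
  ring

lemma iteratedDeriv_exp_neg_one_div (n : ℕ) {t : ℝ} (ht : t ≠ 0) :
    iteratedDeriv n (fun x => Real.exp (-1 / x)) t
      = (expNegInvPoly n).eval (-1 / t) * Real.exp (-1 / t) := by
  induction n generalizing t with
  | zero => simp [expNegInvPoly]
  | succ n ih =>
    have hnear : iteratedDeriv n (fun x => Real.exp (-1 / x)) =ᶠ[nhds t]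
        fun x => (expNegInvPoly n).eval (-1 / x) * Real.exp (-1 / x) :=
      Filter.eventuallyEq_of_mem (isOpen_ne.mem_nhds ht) fun _ hx => ih hx
    rw [iteratedDeriv_succ, hnear.deriv_eq, expNegInvPoly]
    exact (hasDerivAt_eval_neg_inv_mul_exp _ ht).deriv

/-- `g(t) = exp (-1/t)` is absolutely monotonic on `(-∞, 0)`:
for every `i ≥ 0` and every `t < 0`, `g^(i)(t) ≥ 0`. -/
theorem exp_neg_one_div_absolutely_monotonic (i : ℕ) (t : ℝ) (ht : t < 0) :
    0 ≤ iteratedDeriv i (fun x : ℝ => Real.exp (-1 / x)) t := by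
  rw [iteratedDeriv_exp_neg_one_div i ht.ne]
  have hu : 0 ≤ -1 / t := div_nonneg_of_nonpos (by norm_num) ht.le
  exact mul_nonneg (eval_nonneg_of_coeff_nonneg (expNegInvPoly_coeff_nonneg i) hu)
    (Real.exp_nonneg _)
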